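/- Let k ≥ 1, let q be a unit imaginary quaternion with q ≠ ±i, and let W_{k,q} ⊆ ℍ^k be the real vector subspace of all vectors of the form (a₁ + b₁q + b₂i, a₂ + b₂q + b₃i, …, a_{k−1} + b_{k−1}q + b_k i, a_k + b_k q), where a₁, b₁, …, a_k, b_k are real numbers. Then for every unit imaginary quaternion p with p ≠ q and p ≠ −q, one has W_{k,q} ∩ p•W_{k,q} = 0. -/

import Mathlib

/-!
Let `φ : ℂ → ℍ` be the real algebra embedding with `φ i = q`; coordinate `t` of a vector of
`W_{k,q}` is `φ (a_t + b_t i) + b_{t+1} i`. If `φ z = p φ w` with `w ≠ 0`, then `p = φ (z / w)`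
lies in the field `φ(ℂ)`, whose only square roots of `-1` are `±q`. Hence on `W ∩ p•W` the
coefficients vanish coordinate by coordinate, starting from the last one, where no `i`-term occurs.
-/

open Quaternion

/-- The quaternion unit `i`. -/
noncomputable def iq : Quaternion ℝ := ⟨0, 1, 0, 0⟩

/-- Componentwise left multiplication by a quaternion `p` on `ℍ^n`, as a real-linear map. -/
noncomputable def mulLeftLM (n : ℕ) (p : Quaternion ℝ) :
    (Fin n → Quaternion ℝ) →ₗ[ℝ] (Fin n → Quaternion ℝ) :=
  LinearMap.pi fun i => (LinearMap.mulLeft ℝ p).comp (LinearMap.proj i)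

/-- The model subspace `W_{k,q} ⊆ ℍ^k` (with `u` the extra imaginary unit, `u = i` when
`q ≠ ±i`): all vectors `(a₁ + b₁q + b₂u, a₂ + b₂q + b₃u, …, a_{k−1} + b_{k−1}q + b_k u,
a_k + b_k q)` with the `a`'s and `b`'s real. -/
noncomputable def WkSub (k : ℕ) (q u : Quaternion ℝ) :
    Submodule ℝ (Fin k → Quaternion ℝ) where
  carrier := {y | ∃ (a : Fin k → ℝ) (b : ℕ → ℝ), (∀ m, k ≤ m → b m = 0) ∧
    ∀ t : Fin k, y t = ((a t : ℝ) : ℍ[ℝ]) + b t • q + b ((t : ℕ) + 1) • u}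
  add_mem' := by
    rintro y y' ⟨a, b, hb, hy⟩ ⟨a', b', hb', hy'⟩
    refine ⟨a + a', fun m => b m + b' m, fun m hm => by simp [hb m hm, hb' m hm], fun t => ?_⟩
    simp only [Pi.add_apply, hy t, hy' t]
    push_cast
    module
  zero_mem' :=
    ⟨0, 0, fun m _ => rfl, fun t => by simp⟩
  smul_mem' := by
    rintro r y ⟨a, b, hb, hy⟩
    refine ⟨r • a, fun m => r * b m, fun m hm => by simp [hb m hm], fun t => ?_⟩
    simp only [Pi.smul_apply, hy t]
    ext <;> simp <;> ring

open Complex in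
theorem Complex.eq_zero_of_algHom_eq_mul_algHom {D : Type*} [DivisionRing D] [Algebra ℝ D]
    (φ : ℂ →ₐ[ℝ] D) {p : D} (hp : p ^ 2 = -1) (hpI : p ≠ φ I) (hpI' : p ≠ -φ I) {z w : ℂ}
    (h : φ z = p * φ w) : z = 0 ∧ w = 0 := by
  have hw : w = 0 := by
    by_contra hw
    have hp_eq : p = φ (z * w⁻¹) := by
      rw [map_mul, map_inv₀, h, mul_inv_cancel_right₀ ((map_ne_zero φ).2 hw)]
    have hsq : (z * w⁻¹) ^ 2 = I ^ 2 := by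
      apply φ.toRingHom.injective
      simp [← hp_eq, hp]
    rcases sq_eq_sq_iff_eq_or_eq_neg.1 hsq with h' | h'
    · exact hpI (by rw [hp_eq, h'])
    · exact hpI' (by rw [hp_eq, h', map_neg])
  refine ⟨(map_eq_zero φ).1 ?_, hw⟩
  rw [h, hw, map_zero, mul_zero]

theorem Nat.forall_of_forall_ge_of_succ {P : ℕ → Prop} (k : ℕ) (hge : ∀ m, k ≤ m → P m)
    (hsucc : ∀ m < k, P (m + 1) → P m) (m : ℕ) : P m := by
  rcases le_total m k with hmk | hkm
  · exact Nat.decreasingInduction (motive := fun m _ => P m) hsucc (hge k le_rfl) hmk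
  · exact hge m hkm

theorem stmt12_general (k : ℕ) (q : Quaternion ℝ) (hq : q ^ 2 = -1)
    (p : Quaternion ℝ) (hp : p ^ 2 = -1) (hpq : p ≠ q) (hpq' : p ≠ -q) :
    WkSub k q iq ⊓ (WkSub k q iq).map (mulLeftLM k p) = ⊥ := by
  set φ := Complex.liftAux q (by rw [← sq, hq])
  have hφ : ∀ x y : ℝ, φ ⟨x, y⟩ = (x : ℍ[ℝ]) + y • q := fun x y => Complex.liftAux_apply _ _ _
  have hφI : φ Complex.I = q := Complex.liftAux_apply_I _ _
  rw [eq_bot_iff]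
  rintro y ⟨⟨a, b, hb, hy⟩, x, ⟨c, d, hd, hx⟩, hxy⟩
  have hcoord : ∀ t : Fin k, b (t + 1) = 0 → d (t + 1) = 0 →
      (⟨a t, b t⟩ : ℂ) = 0 ∧ (⟨c t, d t⟩ : ℂ) = 0 := by
    intro t hb1 hd1
    refine Complex.eq_zero_of_algHom_eq_mul_algHom φ hp (hφI ▸ hpq) (hφI ▸ hpq') ?_
    have hyt : y t = p * x t := by rw [← hxy]; rfl
    rw [hy t, hx t, hb1, hd1, zero_smul, add_zero, add_zero] at hyt
    rwa [hφ, hφ]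
  have hbd : ∀ m, b m = 0 ∧ d m = 0 := by
    refine Nat.forall_of_forall_ge_of_succ k (fun m hm => ⟨hb m hm, hd m hm⟩) ?_
    rintro m hm ⟨hb1, hd1⟩
    obtain ⟨hab, hcd⟩ := hcoord ⟨m, hm⟩ hb1 hd1
    exact ⟨congrArg Complex.im hab, congrArg Complex.im hcd⟩
  funext t
  have hab := (hcoord t (hbd _).1 (hbd _).2).1
  rw [hy t, (hbd (t + 1)).1, zero_smul, add_zero, ← hφ, hab, map_zero]
  rfl

/-- For `k ≥ 1` and a unit imaginary quaternion `q ≠ ±i`, the subspace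
`W_{k,q} ⊆ ℍ^k` satisfies `W_{k,q} ∩ p•W_{k,q} = 0` for every unit imaginary
quaternion `p` with `p ≠ ±q`. -/
theorem stmt12 (k : ℕ) (hk : 1 ≤ k) (q : Quaternion ℝ) (hq : q ^ 2 = -1)
    (hqi : q ≠ iq) (hqi' : q ≠ -iq)
    (p : Quaternion ℝ) (hp : p ^ 2 = -1) (hpq : p ≠ q) (hpq' : p ≠ -q) :
    WkSub k q iq ⊓ (WkSub k q iq).map (mulLeftLM k p) = ⊥ :=
  stmt12_general k q hq p hp hpq hpq'
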